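/- arXiv:1603.07271 — 5 statements merged into one kernel-verified Lean document; each statement's English description precedes it below -/
import Mathlib

section
/- Let 𝓡 be a cell space. The map ⋊ : M × G/G₀ → M given by (m, gG₀) ↦ g_{m₀,m} g ⇀ m₀ is well-defined (independent of the coset representative g), and it is a right quotient set semi-action of G/G₀ on M with defect G₀: (i) m ⋊ G₀ = m for every m ∈ M; and (ii) for every subgroup H of G with {g_{m₀,m} : m ∈ M} ⊆ H, for every m ∈ M and every h ∈ H there exists h₀ ∈ H₀ such that for every 𝔤 ∈ G/G₀ one has m ⋊ (h·𝔤) = (m ⋊ hG₀) ⋊ (h₀·𝔤). -/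
open MulAction

/-- The right quotient-set semi-action `⋊` induced by a coordinate system
`(m₀, coord)`: `m ⋊ 𝔤 = coord m • (representative of 𝔤) • m₀`.  It is a
well-defined function on the quotient `G ⧸ G₀`. -/
def semiAct {G M : Type*} [Group G] [MulAction G M] (m₀ : M) (coord : M → G)
    (m : M) (𝔤 : G ⧸ stabilizer G m₀) : M :=
  coord m • ofQuotientStabilizer G m₀ 𝔤

/-
The defect element is `h₀ = g_{m₀,m'}⁻¹ g_{m₀,m} h` with `m' = m ⋊ hG₀`: it fixes `m₀` because
`g_{m₀,m} h ⇀ m₀ = m' = g_{m₀,m'} ⇀ m₀`, and it satisfies `g_{m₀,m'} h₀ = g_{m₀,m} h`, so both sides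
of (ii) equal `g_{m₀,m} h ⇀ (𝔤 ⇀ m₀)`.
-/

section SemiAct

variable {G M : Type*} [Group G] [MulAction G M] (m₀ : M) (coord : M → G)

theorem semiAct_smul (m : M) (g : G) (𝔤 : G ⧸ stabilizer G m₀) :
    semiAct m₀ coord m (g • 𝔤) = (coord m * g) • ofQuotientStabilizer G m₀ 𝔤 := by
  rw [semiAct, ofQuotientStabilizer_smul, mul_smul]

theorem semiAct_mk (m : M) (g : G) :
    semiAct m₀ coord m (QuotientGroup.mk g) = (coord m * g) • m₀ := by
  rw [semiAct, ofQuotientStabilizer_mk, mul_smul]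

theorem semiAct_mk_one {m : M} (hm : coord m • m₀ = m) :
    semiAct m₀ coord m (QuotientGroup.mk (1 : G)) = m := by
  rw [semiAct_mk, mul_one, hm]

theorem semiAct_smul_eq_semiAct_smul {m m' : M} {g g' : G} (h : coord m * g = coord m' * g')
    (𝔤 : G ⧸ stabilizer G m₀) :
    semiAct m₀ coord m (g • 𝔤) = semiAct m₀ coord m' (g' • 𝔤) := by
  rw [semiAct_smul, semiAct_smul, h]

theorem inv_coord_mul_mem_stabilizer {m' : M} (hm' : coord m' • m₀ = m') {g : G}
    (hg : g • m₀ = m') : (coord m')⁻¹ * g ∈ stabilizer G m₀ := by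
  rw [mem_stabilizer_iff, mul_smul, hg, inv_smul_eq_iff, hm']

end SemiAct

theorem semiAct_isSemiAction_general {G M : Type*} [Group G] [MulAction G M]
    (m₀ : M) (coord : M → G)
    (hc : ∀ m : M, coord m • m₀ = m) :
    (∀ (m : M) (g : G),
        semiAct m₀ coord m (QuotientGroup.mk g) = (coord m * g) • m₀) ∧
    (∀ m : M, semiAct m₀ coord m (QuotientGroup.mk (1 : G)) = m) ∧
    (∀ H : Subgroup G, (∀ m : M, coord m ∈ H) →
      ∀ m : M, ∀ h ∈ H, ∃ h₀ ∈ H, h₀ ∈ stabilizer G m₀ ∧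
        ∀ 𝔤 : G ⧸ stabilizer G m₀,
          semiAct m₀ coord m (h • 𝔤)
            = semiAct m₀ coord
                (semiAct m₀ coord m (QuotientGroup.mk h)) (h₀ • 𝔤)) := by
  refine ⟨semiAct_mk m₀ coord, fun m ↦ semiAct_mk_one m₀ coord (hc m), ?_⟩
  intro H hH m h hh
  set m' := semiAct m₀ coord m (QuotientGroup.mk h)
  refine ⟨(coord m')⁻¹ * (coord m * h),
    H.mul_mem (H.inv_mem (hH m')) (H.mul_mem (hH m) hh),
    inv_coord_mul_mem_stabilizer m₀ coord (hc m') (semiAct_mk m₀ coord m h).symm,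
    fun 𝔤 ↦ semiAct_smul_eq_semiAct_smul m₀ coord (mul_inv_cancel_left _ _).symm 𝔤⟩

/-- Let `𝓡` be a cell space.  The map `⋊ : M × G/G₀ → M`, `(m, gG₀) ↦ g_{m₀,m} g ⇀ m₀`
is well defined (it is a function on cosets satisfying
`m ⋊ (gG₀) = (g_{m₀,m} * g) ⇀ m₀` for every representative `g`), and it is a right
quotient set semi-action of `G/G₀` on `M` with defect `G₀`:
(i) `m ⋊ G₀ = m` for every `m ∈ M`; and
(ii) for every subgroup `H` of `G` with `{g_{m₀,m} : m ∈ M} ⊆ H`, for every `m ∈ M`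
and every `h ∈ H` there is an `h₀ ∈ H₀` such that for every `𝔤 ∈ G/G₀` one has
`m ⋊ (h·𝔤) = (m ⋊ hG₀) ⋊ (h₀·𝔤)`. -/
theorem semiAct_isSemiAction {G M : Type*} [Group G] [MulAction G M]
    (htrans : ∀ m m' : M, ∃ g : G, g • m = m')
    (m₀ : M) (coord : M → G)
    (hc : ∀ m : M, coord m • m₀ = m) (hc0 : coord m₀ = 1) :
    (∀ (m : M) (g : G),
        semiAct m₀ coord m (QuotientGroup.mk g) = (coord m * g) • m₀) ∧
    (∀ m : M, semiAct m₀ coord m (QuotientGroup.mk (1 : G)) = m) ∧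
    (∀ H : Subgroup G, (∀ m : M, coord m ∈ H) →
      ∀ m : M, ∀ h ∈ H, ∃ h₀ ∈ H, h₀ ∈ stabilizer G m₀ ∧
        ∀ 𝔤 : G ⧸ stabilizer G m₀,
          semiAct m₀ coord m (h • 𝔤)
            = semiAct m₀ coord
                (semiAct m₀ coord m (QuotientGroup.mk h)) (h₀ • 𝔤)) :=
  semiAct_isSemiAction_general m₀ coord hc
end

section
/- Let (M, G, ⇀) be a left homogeneous space, let K and K' be two coordinate systems for it with origins m₀ and m₀' and stabilisers G₀ and G₀', let H be a subgroup of G containing all coordinates of K and of K', and let h ∈ H satisfy h ⇀ m₀ = m₀'. Let (Q, N, δ) be a semi-cellular automaton over the cell space ((M,G,⇀), K) whose local transition function δ is •_{H₀}-invariant, where H₀ = H ∩ G₀. Define N' = {(h g h⁻¹)G₀' : gG₀ ∈ N} ⊆ G/G₀' and δ' : Q^{N'} → Q by δ'(ℓ') = δ(n ↦ ℓ'(h∘n)), where h∘(gG₀) = (h g h⁻¹)G₀'. Then (Q, N', δ') is a semi-cellular automaton over the cell space ((M,G,⇀), K'), i.e. N' is well-defined with G₀'·N' ⊆ N', and its global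 transition function equals the global transition function of (Q, N, δ). -/
/-!
Conjugation by `h` carries `G₀` onto `G₀' = h G₀ h⁻¹`, so `h ∘ -` is a well-defined map
`G/G₀ → G/G₀'` intertwining the action of `g ∈ G` with that of `h g h⁻¹`. At a cell `m` the two
coordinate systems differ by `h₀ = g_{m₀,m}⁻¹ g'_{m₀',m} h ∈ H ∩ G₀`, and
`m ⋊' (h ∘ n) = m ⋊ (h₀ n)`. Hence `Δ'(c)(m)` is `δ` applied to the `h₀⁻¹`-translate of the local
configuration of `c` at `m`, which by invariance is `Δ(c)(m)`.
-/

open MulAction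

/-- The left action `•` of the stabiliser `G₀` on local configurations `ℓ ∈ Q^N`,
`(g₀ • ℓ)(n) = ℓ(g₀⁻¹ · n)`. -/
def bulletAct {G M : Type*} [Group G] [MulAction G M] {m₀ : M}
    {N : Set (G ⧸ stabilizer G m₀)}
    (hN : ∀ g₀ ∈ stabilizer G m₀, ∀ n ∈ N, g₀ • n ∈ N) {Q : Type*}
    (g₀ : G) (hg₀ : g₀ ∈ stabilizer G m₀) (ℓ : N → Q) : N → Q :=
  fun n => ℓ ⟨g₀⁻¹ • (n : G ⧸ stabilizer G m₀), hN g₀⁻¹ (inv_mem hg₀) _ n.2⟩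

/-- The global transition function `Δ` of the semi-cellular automaton `(Q, N, δ)`:
`Δ(c)(m) = δ(n ↦ c(m ⋊ n))`. -/
def globalTrans {G M : Type*} [Group G] [MulAction G M] (m₀ : M) (coord : M → G)
    {Q : Type*} (N : Set (G ⧸ stabilizer G m₀)) (δ : (N → Q) → Q)
    (c : M → Q) : M → Q :=
  fun m => δ fun n => c (semiAct m₀ coord m (n : G ⧸ stabilizer G m₀))

/-- The map `h ∘ - : G/G₀ → G/G₀'` sending the coset `gG₀` to the coset
`(h g h⁻¹)G₀'`, implemented via a choice of representative. -/
noncomputable def conjMap {G : Type*} [Group G] (G₀ G₀' : Subgroup G) (h : G)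
    (x : G ⧸ G₀) : G ⧸ G₀' :=
  QuotientGroup.mk (h * x.out * h⁻¹)

/-- The transported local transition function
`δ' : Q^{N'} → Q, δ'(ℓ') = δ(n ↦ ℓ'(h ∘ n))`, where `N' = h ∘ N`. -/
noncomputable def transportedDelta {G M : Type*} [Group G] [MulAction G M]
    (m₀ m₀' : M) {Q : Type*} (N : Set (G ⧸ stabilizer G m₀)) (δ : (N → Q) → Q)
    (h : G)
    (ℓ' : (conjMap (stabilizer G m₀) (stabilizer G m₀') h '' N :
            Set (G ⧸ stabilizer G m₀')) → Q) : Q :=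
  δ fun n => ℓ' ⟨conjMap (stabilizer G m₀) (stabilizer G m₀') h
                    (n : G ⧸ stabilizer G m₀),
                 Set.mem_image_of_mem _ n.2⟩

theorem conj_mem_stabilizer_smul {G M : Type*} [Group G] [MulAction G M] {m : M} {s : G}
    (hs : s ∈ stabilizer G m) (h : G) : h * s * h⁻¹ ∈ stabilizer G (h • m) := by
  rw [stabilizer_smul_eq_stabilizer_map_conj]
  exact ⟨s, hs, rfl⟩

theorem inv_conj_mem_stabilizer {G M : Type*} [Group G] [MulAction G M] {m : M} {h s : G}
    (hs : s ∈ stabilizer G (h • m)) : h⁻¹ * s * h ∈ stabilizer G m := by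
  simpa using conj_mem_stabilizer_smul hs h⁻¹

section conjMap

variable {G : Type*} [Group G] {G₀ G₀' : Subgroup G} {h : G}

theorem conjMap_mk (hG : ∀ s ∈ G₀, h * s * h⁻¹ ∈ G₀') (g : G) :
    conjMap G₀ G₀' h (g : G ⧸ G₀) = (h * g * h⁻¹ : G) := by
  obtain ⟨s, hs⟩ := QuotientGroup.mk_out_eq_mul G₀ g
  rw [conjMap, hs, QuotientGroup.eq]
  convert hG _ (inv_mem s.2) using 1
  group

theorem conjMap_smul (hG : ∀ s ∈ G₀, h * s * h⁻¹ ∈ G₀') (g : G) (x : G ⧸ G₀) :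
    conjMap G₀ G₀' h (g • x) = (h * g * h⁻¹) • conjMap G₀ G₀' h x := by
  induction x using QuotientGroup.induction_on with
  | H x =>
    rw [MulAction.Quotient.smul_mk, conjMap_mk hG, conjMap_mk hG, MulAction.Quotient.smul_mk]
    congr 1
    simp only [smul_eq_mul]
    group

end conjMap

section transport

variable {G M : Type*} [Group G] [MulAction G M]

theorem ofQuotientStabilizer_conjMap (m₀ : M) (h : G) (x : G ⧸ stabilizer G m₀) :
    ofQuotientStabilizer G (h • m₀)
        (conjMap (stabilizer G m₀) (stabilizer G (h • m₀)) h x) =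
      h • ofQuotientStabilizer G m₀ x := by
  induction x using QuotientGroup.induction_on with
  | H g =>
    rw [conjMap_mk (fun s hs => conj_mem_stabilizer_smul hs h), ofQuotientStabilizer_mk,
      ofQuotientStabilizer_mk]
    simp only [mul_smul, inv_smul_smul]

theorem smul_mem_image_conjMap {m₀ : M} {N : Set (G ⧸ stabilizer G m₀)}
    (hN : ∀ g₀ ∈ stabilizer G m₀, ∀ n ∈ N, g₀ • n ∈ N) (h : G) :
    ∀ g₀ ∈ stabilizer G (h • m₀),
      ∀ n' ∈ conjMap (stabilizer G m₀) (stabilizer G (h • m₀)) h '' N,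
        g₀ • n' ∈ conjMap (stabilizer G m₀) (stabilizer G (h • m₀)) h '' N := by
  rintro g₀ hg₀ _ ⟨x, hx, rfl⟩
  refine ⟨(h⁻¹ * g₀ * h) • x, hN _ (inv_conj_mem_stabilizer hg₀) x hx, ?_⟩
  rw [conjMap_smul (fun s hs => conj_mem_stabilizer_smul hs h)]
  group

theorem semiAct_conjMap (m₀ : M) (coord coord' : M → G) (h : G) (m : M)
    (x : G ⧸ stabilizer G m₀) :
    semiAct (h • m₀) coord' m (conjMap (stabilizer G m₀) (stabilizer G (h • m₀)) h x) =
      semiAct m₀ coord m (((coord m)⁻¹ * coord' m * h) • x) := by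
  rw [semiAct, semiAct, ofQuotientStabilizer_conjMap, ofQuotientStabilizer_smul, smul_smul,
    smul_smul]
  group

theorem globalTrans_transportedDelta {Q : Type*} (m₀ : M) (coord coord' : M → G)
    (N : Set (G ⧸ stabilizer G m₀)) (δ : (N → Q) → Q) (h : G) (c : M → Q) (m : M) :
    globalTrans (h • m₀) coord' (conjMap (stabilizer G m₀) (stabilizer G (h • m₀)) h '' N)
        (transportedDelta m₀ (h • m₀) N δ h) c m =
      δ fun n =>
        c (semiAct m₀ coord m (((coord m)⁻¹ * coord' m * h) • (n : G ⧸ stabilizer G m₀))) := by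
  simp only [globalTrans, transportedDelta, semiAct_conjMap m₀ coord]

theorem inv_coord_mul_coord_mul_mem_stabilizer {m₀ : M} {coord coord' : M → G} {h : G}
    (hc : ∀ m : M, coord m • m₀ = m) (hc' : ∀ m : M, coord' m • h • m₀ = m) (m : M) :
    (coord m)⁻¹ * coord' m * h ∈ stabilizer G m₀ := by
  rw [mem_stabilizer_iff, mul_smul, mul_smul, hc', inv_smul_eq_iff, hc]

end transport

theorem transported_automaton_same_globalTrans_general {G M : Type*} [Group G] [MulAction G M]
    (m₀ : M) (coord : M → G)
    (hc : ∀ m : M, coord m • m₀ = m)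
    (m₀' : M) (coord' : M → G)
    (hc' : ∀ m : M, coord' m • m₀' = m)
    (H : Subgroup G) (hH : ∀ m : M, coord m ∈ H) (hH' : ∀ m : M, coord' m ∈ H)
    (h : G) (hhH : h ∈ H) (hh : h • m₀ = m₀')
    {Q : Type*} (N : Set (G ⧸ stabilizer G m₀))
    (hN : ∀ g₀ ∈ stabilizer G m₀, ∀ n ∈ N, g₀ • n ∈ N)
    (δ : (N → Q) → Q)
    (hinv : ∀ h₀ : G, h₀ ∈ H → ∀ hs : h₀ ∈ stabilizer G m₀,
      ∀ ℓ : N → Q, δ (bulletAct hN h₀ hs ℓ) = δ ℓ) :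
    (∀ g : G,
      conjMap (stabilizer G m₀) (stabilizer G m₀') h (QuotientGroup.mk g)
        = QuotientGroup.mk (h * g * h⁻¹)) ∧
    (∀ g₀ ∈ stabilizer G m₀',
      ∀ n' ∈ conjMap (stabilizer G m₀) (stabilizer G m₀') h '' N,
        g₀ • n' ∈ conjMap (stabilizer G m₀) (stabilizer G m₀') h '' N) ∧
    (∀ (c : M → Q) (m : M),
      globalTrans m₀' coord'
          (conjMap (stabilizer G m₀) (stabilizer G m₀') h '' N)
          (transportedDelta m₀ m₀' N δ h) c m
        = globalTrans m₀ coord N δ c m) := by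
  subst hh
  refine ⟨conjMap_mk fun s hs => conj_mem_stabilizer_smul hs h, smul_mem_image_conjMap hN h,
    fun c m => ?_⟩
  have hH₀ : (coord m)⁻¹ * coord' m * h ∈ H := mul_mem (mul_mem (inv_mem (hH m)) (hH' m)) hhH
  have hs₀ := inv_coord_mul_coord_mul_mem_stabilizer hc hc' m
  rw [globalTrans_transportedDelta m₀ coord, globalTrans]
  convert hinv _ (inv_mem hH₀) (inv_mem hs₀) fun n => c (semiAct m₀ coord m n) using 3
  simp only [bulletAct, inv_inv]

/-- Let `(M, G, ⇀)` be a left homogeneous space, let `K` and `K'` be two coordinate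
systems with origins `m₀, m₀'` and stabilisers `G₀, G₀'`, let `H` be a subgroup of
`G` containing all coordinates of `K` and of `K'`, and let `h ∈ H` satisfy
`h ⇀ m₀ = m₀'`.  Let `(Q, N, δ)` be a semi-cellular automaton over `((M,G,⇀), K)`
whose local transition function is `•_{H₀}`-invariant.  Define `N' = h ∘ N` (where
`h ∘ (gG₀) = (h g h⁻¹)G₀'`) and `δ'(ℓ') = δ(n ↦ ℓ'(h ∘ n))`.  Then `(Q, N', δ')` is
a semi-cellular automaton over `((M,G,⇀), K')` — in particular `h ∘ -` is well
defined on cosets and `G₀'·N' ⊆ N'` — whose global transition function equals the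
one of `(Q, N, δ)`. -/
theorem transported_automaton_same_globalTrans {G M : Type*} [Group G] [MulAction G M]
    (htrans : ∀ m m' : M, ∃ g : G, g • m = m')
    (m₀ : M) (coord : M → G)
    (hc : ∀ m : M, coord m • m₀ = m) (hc0 : coord m₀ = 1)
    (m₀' : M) (coord' : M → G)
    (hc' : ∀ m : M, coord' m • m₀' = m) (hc0' : coord' m₀' = 1)
    (H : Subgroup G) (hH : ∀ m : M, coord m ∈ H) (hH' : ∀ m : M, coord' m ∈ H)
    (h : G) (hhH : h ∈ H) (hh : h • m₀ = m₀')
    {Q : Type*} (N : Set (G ⧸ stabilizer G m₀))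
    (hN : ∀ g₀ ∈ stabilizer G m₀, ∀ n ∈ N, g₀ • n ∈ N)
    (δ : (N → Q) → Q)
    (hinv : ∀ h₀ : G, h₀ ∈ H → ∀ hs : h₀ ∈ stabilizer G m₀,
      ∀ ℓ : N → Q, δ (bulletAct hN h₀ hs ℓ) = δ ℓ) :
    (∀ g : G,
      conjMap (stabilizer G m₀) (stabilizer G m₀') h (QuotientGroup.mk g)
        = QuotientGroup.mk (h * g * h⁻¹)) ∧
    (∀ g₀ ∈ stabilizer G m₀',
      ∀ n' ∈ conjMap (stabilizer G m₀) (stabilizer G m₀') h '' N,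
        g₀ • n' ∈ conjMap (stabilizer G m₀) (stabilizer G m₀') h '' N) ∧
    (∀ (c : M → Q) (m : M),
      globalTrans m₀' coord'
          (conjMap (stabilizer G m₀) (stabilizer G m₀') h '' N)
          (transportedDelta m₀ m₀' N δ h) c m
        = globalTrans m₀ coord N δ c m) :=
  transported_automaton_same_globalTrans_general m₀ coord hc m₀' coord' hc' H hH hH' h hhH hh N hN δ
    hinv
end

section
/- Let 𝓡 be a cell space, let (Q, N, δ) be a semi-cellular automaton over 𝓡, let Δ₀ : Q^M → Q^M be a map, and let H be a subgroup of G with {g_{m₀,m} : m ∈ M} ⊆ H. Then the following are equivalent: (1) δ is •_{H₀}-invariant and Δ₀ is the global transition function of (Q, N, δ); (2) Δ₀ is ⇀_H-equivariant and for every c ∈ Q^M one has Δ₀(c)(m₀) = δ(n ↦ c(m₀ ⋊ n)). -/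
open MulAction

/-- The left action `⇀` of `G` on global configurations `c ∈ Q^M`,
`(g ⇀ c)(m) = c(g⁻¹ ⇀ m)`. -/
def shiftConf {G M : Type*} [Group G] [MulAction G M] {Q : Type*}
    (g : G) (c : M → Q) : M → Q :=
  fun m => c (g⁻¹ • m)

/-! The cells `m ⋊ n` are the translates by `g_{m₀,m}` of the cells `m₀ ⋊ n`, so `Δ(c)(m)` is `δ`
applied to the local configuration of `g_{m₀,m}⁻¹ ⇀ c` at `m₀`.  On local configurations at `m₀`,
translation by `h₀ ∈ H₀` is `h₀ •`; hence `•_{H₀}`-invariance of `δ` amounts to `⇀_H`-equivariance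
of `Δ`, and an `⇀_H`-equivariant map is determined by its values at `m₀` because every coordinate
`g_{m₀,m}` lies in `H`. -/

section CellSpace

variable {G M : Type*} [Group G] [MulAction G M] {Q : Type*}

theorem shiftConf_shiftConf (g g' : G) (c : M → Q) :
    shiftConf g (shiftConf g' c) = shiftConf (g * g') c := by
  funext m
  simp only [shiftConf, mul_inv_rev, mul_smul]

theorem shiftConf_one (c : M → Q) : shiftConf (1 : G) c = c := by
  funext m
  simp only [shiftConf, inv_one, one_smul]

theorem shiftConf_apply_of_mem_stabilizer {g : G} {m : M} (hg : g ∈ stabilizer G m)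
    (c : M → Q) : shiftConf g c m = c m := by
  rw [shiftConf, mem_stabilizer_iff.mp (inv_mem hg)]

variable {m₀ : M}

theorem semiAct_origin {coord : M → G} (hc0 : coord m₀ = 1) (𝔤 : G ⧸ stabilizer G m₀) :
    semiAct m₀ coord m₀ 𝔤 = ofQuotientStabilizer G m₀ 𝔤 := by
  rw [semiAct, hc0, one_smul]

/-- `n ↦ c(m₀ ⋊ n)`, written without coordinates (see `semiAct_origin`). -/
def localConf (N : Set (G ⧸ stabilizer G m₀)) (c : M → Q) : N → Q :=
  fun n => c (ofQuotientStabilizer G m₀ n)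

theorem exists_localConf_eq [Nonempty Q] (N : Set (G ⧸ stabilizer G m₀)) (ℓ : N → Q) :
    ∃ c : M → Q, localConf N c = ℓ :=
  ((injective_ofQuotientStabilizer G m₀).comp Subtype.val_injective).surjective_comp_right ℓ

variable {N : Set (G ⧸ stabilizer G m₀)}

theorem localConf_shiftConf (hN : ∀ g₀ ∈ stabilizer G m₀, ∀ n ∈ N, g₀ • n ∈ N) {g₀ : G}
    (hg₀ : g₀ ∈ stabilizer G m₀) (c : M → Q) :
    localConf N (shiftConf g₀ c) = bulletAct hN g₀ hg₀ (localConf N c) := by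
  funext n
  simp only [localConf, shiftConf, bulletAct, ofQuotientStabilizer_smul]

theorem globalTrans_apply (coord : M → G) (δ : (N → Q) → Q) (c : M → Q) (m : M) :
    globalTrans m₀ coord N δ c m = δ (localConf N (shiftConf (coord m)⁻¹ c)) := by
  unfold globalTrans localConf shiftConf semiAct
  simp only [inv_inv]

variable {coord : M → G} {H : Subgroup G} {δ : (N → Q) → Q}

theorem globalTrans_shiftConf (hc : ∀ m : M, coord m • m₀ = m) (hH : ∀ m : M, coord m ∈ H)
    (hN : ∀ g₀ ∈ stabilizer G m₀, ∀ n ∈ N, g₀ • n ∈ N)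
    (hδ : ∀ h₀ : G, h₀ ∈ H → ∀ hs : h₀ ∈ stabilizer G m₀,
      ∀ ℓ : N → Q, δ (bulletAct hN h₀ hs ℓ) = δ ℓ)
    {h : G} (hh : h ∈ H) (c : M → Q) :
    globalTrans m₀ coord N δ (shiftConf h c) = shiftConf h (globalTrans m₀ coord N δ c) := by
  funext m
  set m' := h⁻¹ • m
  -- `h` carries the cell `m'` to `m`, so it differs from `g_{m₀,m} g_{m₀,m'}⁻¹` by an element of `H₀`
  set g₀ := (coord m)⁻¹ * h * coord m'
  have hg₀ : g₀ ∈ stabilizer G m₀ := by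
    rw [mem_stabilizer_iff, mul_smul, hc, mul_smul, smul_inv_smul, inv_smul_eq_iff, hc]
  have hg₀H : g₀ ∈ H := mul_mem (mul_mem (inv_mem (hH m)) hh) (hH m')
  have hshift : shiftConf (coord m)⁻¹ (shiftConf h c) =
      shiftConf g₀ (shiftConf (coord m')⁻¹ c) := by
    simp only [shiftConf_shiftConf, g₀, mul_inv_cancel_right]
  rw [globalTrans_apply, hshift, localConf_shiftConf hN hg₀, hδ g₀ hg₀H hg₀, shiftConf,
    globalTrans_apply]

theorem eq_globalTrans_of_shiftConf_coord (hc : ∀ m : M, coord m • m₀ = m)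
    {Δ₀ : (M → Q) → (M → Q)}
    (hequiv : ∀ m : M, ∀ c : M → Q, Δ₀ (shiftConf (coord m) c) = shiftConf (coord m) (Δ₀ c))
    (horigin : ∀ c : M → Q, Δ₀ c m₀ = δ (localConf N c)) :
    Δ₀ = globalTrans m₀ coord N δ := by
  funext c m
  calc Δ₀ c m = Δ₀ (shiftConf (coord m) (shiftConf (coord m)⁻¹ c)) m := by
        rw [shiftConf_shiftConf, mul_inv_cancel, shiftConf_one]
    _ = Δ₀ (shiftConf (coord m)⁻¹ c) m₀ := by
        rw [hequiv, shiftConf, inv_smul_eq_iff.mpr (hc m).symm]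
    _ = globalTrans m₀ coord N δ c m := by
        rw [horigin, globalTrans_apply]

theorem bulletAct_invariant_of_shiftConf (hN : ∀ g₀ ∈ stabilizer G m₀, ∀ n ∈ N, g₀ • n ∈ N)
    {Δ₀ : (M → Q) → (M → Q)} {h₀ : G} (hs : h₀ ∈ stabilizer G m₀)
    (hequiv : ∀ c : M → Q, Δ₀ (shiftConf h₀ c) = shiftConf h₀ (Δ₀ c))
    (horigin : ∀ c : M → Q, Δ₀ c m₀ = δ (localConf N c)) (ℓ : N → Q) :
    δ (bulletAct hN h₀ hs ℓ) = δ ℓ := by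
  cases isEmpty_or_nonempty Q
  · exact isEmptyElim (δ ℓ)
  obtain ⟨c, rfl⟩ := exists_localConf_eq N ℓ
  rw [← localConf_shiftConf hN hs, ← horigin, hequiv, shiftConf_apply_of_mem_stabilizer hs,
    horigin]

end CellSpace

theorem globalTrans_determined_at_origin_general {G M : Type*} [Group G] [MulAction G M]
    (m₀ : M) (coord : M → G)
    (hc : ∀ m : M, coord m • m₀ = m) (hc0 : coord m₀ = 1)
    {Q : Type*} (N : Set (G ⧸ stabilizer G m₀))
    (hN : ∀ g₀ ∈ stabilizer G m₀, ∀ n ∈ N, g₀ • n ∈ N)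
    (δ : (N → Q) → Q)
    (Δ₀ : (M → Q) → (M → Q))
    (H : Subgroup G) (hH : ∀ m : M, coord m ∈ H) :
    ((∀ h₀ : G, h₀ ∈ H → ∀ hs : h₀ ∈ stabilizer G m₀,
        ∀ ℓ : N → Q, δ (bulletAct hN h₀ hs ℓ) = δ ℓ) ∧
      Δ₀ = globalTrans m₀ coord N δ)
    ↔ ((∀ h ∈ H, ∀ c : M → Q, Δ₀ (shiftConf h c) = shiftConf h (Δ₀ c)) ∧
        (∀ c : M → Q,
          Δ₀ c m₀ = δ fun n => c (semiAct m₀ coord m₀ (n : G ⧸ stabilizer G m₀)))) := by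
  have hlocal : ∀ c : M → Q,
      (δ fun n => c (semiAct m₀ coord m₀ (n : G ⧸ stabilizer G m₀))) = δ (localConf N c) := by
    intro c
    simp only [semiAct_origin hc0]
    rfl
  constructor
  · rintro ⟨hδ, rfl⟩
    exact ⟨fun h hh c => globalTrans_shiftConf hc hH hN hδ hh c, fun c => rfl⟩
  · rintro ⟨hequiv, horigin⟩
    simp only [hlocal] at horigin
    exact ⟨fun h₀ hh₀ hs => bulletAct_invariant_of_shiftConf hN hs (hequiv h₀ hh₀) horigin,
      eq_globalTrans_of_shiftConf_coord hc (fun m => hequiv _ (hH m)) horigin⟩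

/-- Let `𝓡` be a cell space, let `(Q, N, δ)` be a semi-cellular automaton over `𝓡`,
let `Δ₀ : Q^M → Q^M` be a map, and let `H` be a subgroup of `G` with
`{g_{m₀,m} : m ∈ M} ⊆ H`.  The following are equivalent:
(1) `δ` is `•_{H₀}`-invariant and `Δ₀` is the global transition function of `(Q,N,δ)`;
(2) `Δ₀` is `⇀_H`-equivariant and `Δ₀(c)(m₀) = δ(n ↦ c(m₀ ⋊ n))` for every `c`. -/
theorem globalTrans_determined_at_origin {G M : Type*} [Group G] [MulAction G M]
    (htrans : ∀ m m' : M, ∃ g : G, g • m = m')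
    (m₀ : M) (coord : M → G)
    (hc : ∀ m : M, coord m • m₀ = m) (hc0 : coord m₀ = 1)
    {Q : Type*} (N : Set (G ⧸ stabilizer G m₀))
    (hN : ∀ g₀ ∈ stabilizer G m₀, ∀ n ∈ N, g₀ • n ∈ N)
    (δ : (N → Q) → Q)
    (Δ₀ : (M → Q) → (M → Q))
    (H : Subgroup G) (hH : ∀ m : M, coord m ∈ H) :
    ((∀ h₀ : G, h₀ ∈ H → ∀ hs : h₀ ∈ stabilizer G m₀,
        ∀ ℓ : N → Q, δ (bulletAct hN h₀ hs ℓ) = δ ℓ) ∧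
      Δ₀ = globalTrans m₀ coord N δ)
    ↔ ((∀ h ∈ H, ∀ c : M → Q, Δ₀ (shiftConf h c) = shiftConf h (Δ₀ c)) ∧
        (∀ c : M → Q,
          Δ₀ c m₀ = δ fun n => c (semiAct m₀ coord m₀ (n : G ⧸ stabilizer G m₀)))) :=
  globalTrans_determined_at_origin_general m₀ coord hc hc0 N hN δ Δ₀ H hH
end

section
/- Let 𝓡 be a cell space, let (Q, N, δ) and (Q, N', δ') be two semi-cellular automata over 𝓡 with global transition functions Δ and Δ', and let H be a subgroup of G with {g_{m₀,m} : m ∈ M} ⊆ H such that δ and δ' are •_{H₀}-invariant. Define N'' = {g·n' : n ∈ N, n' ∈ N', g ∈ n} ⊆ G/G₀ (where g ranges over the representatives of the coset n) and δ'' : Q^{N''} → Q by δ''(ℓ'') = δ(n ↦ δ'(n' ↦ ℓ''(g_{m₀, m₀⋊n}·n'))). Then (Q, N'', δ'') is a semi-cellular automaton over 𝓡 (in particular G₀·N'' ⊆ N''), its local transition function δ'' is •_{H₀}-invariant, and its global transition function is Δ ∘ Δ'. -/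
/-!
Both claims rest on one observation: if `a, b ∈ H` satisfy `a ⇀ m₀ = b ⇀ m₀`, then `a⁻¹ b ∈ H₀`,
so `•_{H₀}`-invariance of `δ'` gives `δ'(n' ↦ ℓ(a·n')) = δ'(n' ↦ ℓ(b·n'))`. For the invariance of
`δ''` take `a = h₀⁻¹ g_{m₀, m₀⋊n}` and `b = g_{m₀, m₀⋊(h₀⁻¹·n)}`; for the global transition
function take `a = g_{m₀,m} g_{m₀, m₀⋊n}` and `b = g_{m₀, m⋊n}`.
-/

open MulAction

def compNbhd {G : Type*} [Group G] {G₀ : Subgroup G}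
    (N N' : Set (G ⧸ G₀)) : Set (G ⧸ G₀) :=
  {x | ∃ n ∈ N, ∃ n' ∈ N', ∃ g : G, QuotientGroup.mk g = n ∧ x = g • n'}

theorem mk_coord_semiAct_origin {G M : Type*} [Group G] [MulAction G M]
    (m₀ : M) (coord : M → G) (hc : ∀ m : M, coord m • m₀ = m) (hc0 : coord m₀ = 1)
    (x : G ⧸ stabilizer G m₀) :
    (QuotientGroup.mk (coord (semiAct m₀ coord m₀ x)) : G ⧸ stabilizer G m₀) = x := by
  induction x using QuotientGroup.induction_on with
  | H g =>
    have h1 : semiAct m₀ coord m₀ (QuotientGroup.mk g) = g • m₀ := by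
      simp [semiAct, ofQuotientStabilizer_mk, hc0]
    rw [h1, QuotientGroup.eq]
    have := hc (g • m₀)
    simp only [mem_stabilizer_iff, mul_smul, inv_smul_eq_iff]
    rw [this]

def compDelta {G M : Type*} [Group G] [MulAction G M] (m₀ : M) (coord : M → G)
    (hc : ∀ m : M, coord m • m₀ = m) (hc0 : coord m₀ = 1) {Q : Type*}
    (N N' : Set (G ⧸ stabilizer G m₀))
    (δ : (N → Q) → Q) (δ' : (N' → Q) → Q)
    (ℓ'' : compNbhd N N' → Q) : Q :=
  δ fun n => δ' fun n' =>
    ℓ'' ⟨coord (semiAct m₀ coord m₀ (n : G ⧸ stabilizer G m₀)) • (n' : G ⧸ stabilizer G m₀),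
      ⟨n.1, n.2, n'.1, n'.2, coord (semiAct m₀ coord m₀ (n : G ⧸ stabilizer G m₀)),
        mk_coord_semiAct_origin m₀ coord hc hc0 n.1, rfl⟩⟩

section
variable {G M : Type*} [Group G] [MulAction G M] {m₀ : M} {coord : M → G}

theorem semiAct_eq_ofQuotientStabilizer_smul (m : M) (x : G ⧸ stabilizer G m₀) :
    semiAct m₀ coord m x = ofQuotientStabilizer G m₀ (coord m • x) :=
  (ofQuotientStabilizer_smul G m₀ (coord m) x).symm

theorem coord_semiAct_origin_smul (hc : ∀ m : M, coord m • m₀ = m) (hc0 : coord m₀ = 1)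
    (x : G ⧸ stabilizer G m₀) :
    coord (semiAct m₀ coord m₀ x) • m₀ = ofQuotientStabilizer G m₀ x := by
  rw [hc, semiAct_eq_ofQuotientStabilizer_smul, hc0, one_smul]

theorem apply_translate_eq_of_smul_eq {Q : Type*} {N' : Set (G ⧸ stabilizer G m₀)}
    (hN' : ∀ g₀ ∈ stabilizer G m₀, ∀ n ∈ N', g₀ • n ∈ N') {δ' : (N' → Q) → Q} {H : Subgroup G}
    (hinv' : ∀ h₀ : G, h₀ ∈ H → ∀ hs : h₀ ∈ stabilizer G m₀,
      ∀ ℓ : N' → Q, δ' (bulletAct hN' h₀ hs ℓ) = δ' ℓ)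
    {S : Set (G ⧸ stabilizer G m₀)} (ℓ : S → Q) {a b : G} (ha : a ∈ H) (hb : b ∈ H)
    (hab : a • m₀ = b • m₀) {fa fb : N' → S} (hfa : ∀ n', (fa n' : G ⧸ stabilizer G m₀) = a • n')
    (hfb : ∀ n', (fb n' : G ⧸ stabilizer G m₀) = b • n') :
    δ' (fun n' => ℓ (fa n')) = δ' (fun n' => ℓ (fb n')) := by
  have hstab : a⁻¹ * b ∈ stabilizer G m₀ := by
    rw [mem_stabilizer_iff, mul_smul, inv_smul_eq_iff, hab]
  refine Eq.trans ?_ (hinv' _ (mul_mem (inv_mem ha) hb) hstab _)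
  refine congrArg δ' (funext fun n' => congrArg ℓ (Subtype.ext ?_))
  simp only [hfa, hfb, smul_smul, mul_inv_rev, inv_inv, mul_inv_cancel_left]

theorem compNbhd_smul_mem {G₀ : Subgroup G} {N N' : Set (G ⧸ G₀)} {K : Set G}
    (hN : ∀ g ∈ K, ∀ n ∈ N, g • n ∈ N) : ∀ g ∈ K, ∀ x ∈ compNbhd N N', g • x ∈ compNbhd N N' := by
  rintro g hg x ⟨n, hn, n', hn', r, rfl, rfl⟩
  exact ⟨g • (r : G ⧸ G₀), hN g hg _ hn, n', hn', g * r, rfl, (mul_smul g r n').symm⟩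

end

theorem composition_of_automata_general {G M : Type*} [Group G] [MulAction G M]
    (m₀ : M) (coord : M → G)
    (hc : ∀ m : M, coord m • m₀ = m) (hc0 : coord m₀ = 1)
    {Q : Type*}
    (N : Set (G ⧸ stabilizer G m₀))
    (hN : ∀ g₀ ∈ stabilizer G m₀, ∀ n ∈ N, g₀ • n ∈ N)
    (δ : (N → Q) → Q)
    (N' : Set (G ⧸ stabilizer G m₀))
    (hN' : ∀ g₀ ∈ stabilizer G m₀, ∀ n ∈ N', g₀ • n ∈ N')
    (δ' : (N' → Q) → Q)
    (H : Subgroup G) (hH : ∀ m : M, coord m ∈ H)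
    (hinv : ∀ h₀ : G, h₀ ∈ H → ∀ hs : h₀ ∈ stabilizer G m₀,
      ∀ ℓ : N → Q, δ (bulletAct hN h₀ hs ℓ) = δ ℓ)
    (hinv' : ∀ h₀ : G, h₀ ∈ H → ∀ hs : h₀ ∈ stabilizer G m₀,
      ∀ ℓ : N' → Q, δ' (bulletAct hN' h₀ hs ℓ) = δ' ℓ) :
    ∃ hN'' : ∀ g₀ ∈ stabilizer G m₀, ∀ n ∈ compNbhd N N', g₀ • n ∈ compNbhd N N',
      (∀ h₀ : G, h₀ ∈ H → ∀ hs : h₀ ∈ stabilizer G m₀,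
        ∀ ℓ : compNbhd N N' → Q,
          compDelta m₀ coord hc hc0 N N' δ δ' (bulletAct hN'' h₀ hs ℓ)
            = compDelta m₀ coord hc hc0 N N' δ δ' ℓ) ∧
      (∀ c : M → Q,
        globalTrans m₀ coord (compNbhd N N') (compDelta m₀ coord hc hc0 N N' δ δ') c
          = globalTrans m₀ coord N δ (globalTrans m₀ coord N' δ' c)) := by
  have hk : ∀ x, coord (semiAct m₀ coord m₀ x) • m₀ = ofQuotientStabilizer G m₀ x :=
    coord_semiAct_origin_smul hc hc0
  have hN'' := compNbhd_smul_mem (N' := N') hN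
  refine ⟨hN'', fun h₀ hH₀ hs ℓ => ?_, fun c => funext fun m => ?_⟩
  · refine Eq.trans (congrArg δ (funext fun n => ?_)) (hinv h₀ hH₀ hs _)
    refine apply_translate_eq_of_smul_eq hN' hinv' ℓ (mul_mem (inv_mem hH₀) (hH _)) (hH _) ?_
      (fun _ => (mul_smul _ _ _).symm) (fun _ => rfl)
    rw [mul_smul, hk, hk, ofQuotientStabilizer_smul]
  · refine congrArg δ (funext fun n => ?_)
    set p := semiAct m₀ coord m n with hp
    simp only [globalTrans, semiAct_eq_ofQuotientStabilizer_smul (m := m),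
      semiAct_eq_ofQuotientStabilizer_smul (m := p), smul_smul]
    refine apply_translate_eq_of_smul_eq (S := Set.univ) hN' hinv'
      (fun x => c (ofQuotientStabilizer G m₀ x)) (mul_mem (hH _) (hH _)) (hH _) ?_
      (fa := fun _ => ⟨_, trivial⟩) (fb := fun _ => ⟨_, trivial⟩) (fun _ => rfl) (fun _ => rfl)
    rw [mul_smul, hk, hc, hp, semiAct_eq_ofQuotientStabilizer_smul, ofQuotientStabilizer_smul]

/-- Let `𝓡` be a cell space, let `(Q, N, δ)` and `(Q, N', δ')` be two semi-cellular
automata over `𝓡` with global transition functions `Δ` and `Δ'`, and let `H` be a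
subgroup of `G` with `{g_{m₀,m} : m ∈ M} ⊆ H` such that `δ` and `δ'` are
`•_{H₀}`-invariant.  With `N'' = {g·n' : n ∈ N, n' ∈ N', g ∈ n}` and
`δ''(ℓ'') = δ(n ↦ δ'(n' ↦ ℓ''(g_{m₀, m₀⋊n}·n')))`, the triple `(Q, N'', δ'')` is a
semi-cellular automaton over `𝓡` (in particular `G₀·N'' ⊆ N''`), its local
transition function `δ''` is `•_{H₀}`-invariant, and its global transition function
is `Δ ∘ Δ'`. -/
theorem composition_of_automata {G M : Type*} [Group G] [MulAction G M]
    (htrans : ∀ m m' : M, ∃ g : G, g • m = m')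
    (m₀ : M) (coord : M → G)
    (hc : ∀ m : M, coord m • m₀ = m) (hc0 : coord m₀ = 1)
    {Q : Type*}
    (N : Set (G ⧸ stabilizer G m₀))
    (hN : ∀ g₀ ∈ stabilizer G m₀, ∀ n ∈ N, g₀ • n ∈ N)
    (δ : (N → Q) → Q)
    (N' : Set (G ⧸ stabilizer G m₀))
    (hN' : ∀ g₀ ∈ stabilizer G m₀, ∀ n ∈ N', g₀ • n ∈ N')
    (δ' : (N' → Q) → Q)
    (H : Subgroup G) (hH : ∀ m : M, coord m ∈ H)
    (hinv : ∀ h₀ : G, h₀ ∈ H → ∀ hs : h₀ ∈ stabilizer G m₀,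
      ∀ ℓ : N → Q, δ (bulletAct hN h₀ hs ℓ) = δ ℓ)
    (hinv' : ∀ h₀ : G, h₀ ∈ H → ∀ hs : h₀ ∈ stabilizer G m₀,
      ∀ ℓ : N' → Q, δ' (bulletAct hN' h₀ hs ℓ) = δ' ℓ) :
    ∃ hN'' : ∀ g₀ ∈ stabilizer G m₀, ∀ n ∈ compNbhd N N', g₀ • n ∈ compNbhd N N',
      (∀ h₀ : G, h₀ ∈ H → ∀ hs : h₀ ∈ stabilizer G m₀,
        ∀ ℓ : compNbhd N N' → Q,
          compDelta m₀ coord hc hc0 N N' δ δ' (bulletAct hN'' h₀ hs ℓ)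
            = compDelta m₀ coord hc hc0 N N' δ δ' ℓ) ∧
      (∀ c : M → Q,
        globalTrans m₀ coord (compNbhd N N') (compDelta m₀ coord hc hc0 N N' δ δ') c
          = globalTrans m₀ coord N δ (globalTrans m₀ coord N' δ' c)) :=
  composition_of_automata_general m₀ coord hc hc0 N hN δ N' hN' δ' H hH hinv hinv'
end

section
/- Let 𝓡 be a semi-proper cell space, let K be a compact subset of M, and let E be a subset of G/G₀ such that m₀ ⋊ E = {m₀ ⋊ e : e ∈ E} is a compact subset of M (i.e. E is compact in the topology on G/G₀ induced by the bijection m₀ ⋊ -). Then K ⋊ E = {k ⋊ e : k ∈ K, e ∈ E} is included in a compact subset of M. -/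
open MulAction

/-- A left group set `(M, G, ⇀)`, with `M` a topological space and `G` a topological
group, is *semi-proper* if the action is continuous and its action map
`α : G × M → M × M, (g,m) ↦ (g ⇀ m, m)` is semi-proper, i.e. for each compact
`K ⊆ M × M`, every transversal of the family of fibres `{α⁻¹(k) : k ∈ K}` (a set
obtained by choosing one point from each nonempty fibre) is included in a compact
subset of `G × M`. -/
def SemiProperSMul (G M : Type*) [Group G] [MulAction G M]
    [TopologicalSpace G] [TopologicalSpace M] : Prop :=
  Continuous (fun p : G × M => p.1 • p.2) ∧
  ∀ K : Set (M × M), IsCompact K →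
    ∀ t : M × M → G × M,
      (∀ k ∈ K, (∃ p : G × M, ((p.1 • p.2, p.2) : M × M) = k) →
        (((t k).1 • (t k).2, (t k).2) : M × M) = k) →
      ∃ C : Set (G × M), IsCompact C ∧
        {p : G × M | ∃ k ∈ K,
          (∃ q : G × M, ((q.1 • q.2, q.2) : M × M) = k) ∧ p = t k} ⊆ C

open scoped Pointwise

/- `k ⋊ e = coord k • (m₀ ⋊ e)`, so `K ⋊ E ⊆ coord '' K • (m₀ ⋊ E)`. Semi-properness applied to
`K × {m₀}` with the transversal `(k, m₀) ↦ (coord k, m₀)` puts `coord '' K` inside a compact set,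
and the action is continuous, so the pointwise product of the two compact sets is compact. -/

theorem semiAct_eq_smul_semiAct {G M : Type*} [Group G] [MulAction G M] {m₀ : M}
    {coord : M → G} (hc0 : coord m₀ = 1) (m : M) (e : G ⧸ stabilizer G m₀) :
    semiAct m₀ coord m e = coord m • semiAct m₀ coord m₀ e := by
  simp only [semiAct, hc0, one_smul]

namespace SemiProperSMul

variable {G M : Type*} [Group G] [MulAction G M] [TopologicalSpace G] [TopologicalSpace M]

theorem continuousSMul (hsp : SemiProperSMul G M) : ContinuousSMul G M :=
  ⟨hsp.1⟩

theorem exists_isCompact_image_subset (hsp : SemiProperSMul G M) {K : Set M}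
    (hK : IsCompact K) (m₀ : M) {c : M → G} (hc : ∀ k ∈ K, c k • m₀ = k) :
    ∃ C : Set G, IsCompact C ∧ c '' K ⊆ C := by
  have htransversal : ∀ k ∈ K ×ˢ {m₀}, (∃ p : G × M, ((p.1 • p.2, p.2) : M × M) = k) →
      ((c k.1 • k.2, k.2) : M × M) = k := by
    rintro ⟨k, m⟩ ⟨hk, rfl : m = m₀⟩ -
    simp only [hc k hk]
  obtain ⟨C, hC, hsub⟩ :=
    hsp.2 _ (hK.prod isCompact_singleton) (fun k => (c k.1, k.2)) htransversal
  refine ⟨Prod.fst '' C, hC.image continuous_fst, ?_⟩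
  rintro _ ⟨k, hk, rfl⟩
  exact ⟨(c k, m₀), hsub ⟨(k, m₀), ⟨hk, rfl⟩, ⟨(c k, m₀), by simp only [hc k hk]⟩, rfl⟩, rfl⟩

end SemiProperSMul

theorem semiAct_compact_of_compact_general {G M : Type*} [Group G]
    [TopologicalSpace G] [TopologicalSpace M] [MulAction G M]
    (m₀ : M) (coord : M → G)
    (hc : ∀ m : M, coord m • m₀ = m) (hc0 : coord m₀ = 1)
    (hsp : SemiProperSMul G M)
    (K : Set M) (hK : IsCompact K)
    (E : Set (G ⧸ stabilizer G m₀))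
    (hE : IsCompact (semiAct m₀ coord m₀ '' E)) :
    ∃ C : Set M, IsCompact C ∧
      {x : M | ∃ k ∈ K, ∃ e ∈ E, x = semiAct m₀ coord k e} ⊆ C := by
  obtain ⟨C, hC, hcoordK⟩ := hsp.exists_isCompact_image_subset hK m₀ fun k _ => hc k
  have := hsp.continuousSMul
  refine ⟨C • semiAct m₀ coord m₀ '' E, hC.smul_set hE, ?_⟩
  rintro _ ⟨k, hk, e, he, rfl⟩
  rw [semiAct_eq_smul_semiAct hc0]
  exact Set.smul_mem_smul (hcoordK ⟨k, hk, rfl⟩) ⟨e, he, rfl⟩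

/-- Let `𝓡` be a semi-proper cell space, let `K` be a compact subset of `M`, and let
`E ⊆ G/G₀` be such that `m₀ ⋊ E` is a compact subset of `M` (i.e. `E` is compact in
the topology induced by the bijection `m₀ ⋊ -`).  Then
`K ⋊ E = {k ⋊ e : k ∈ K, e ∈ E}` is included in a compact subset of `M`. -/
theorem semiAct_compact_of_compact {G M : Type*} [Group G]
    [TopologicalSpace G] [IsTopologicalGroup G] [TopologicalSpace M] [MulAction G M]
    (htrans : ∀ m m' : M, ∃ g : G, g • m = m')
    (m₀ : M) (coord : M → G)
    (hc : ∀ m : M, coord m • m₀ = m) (hc0 : coord m₀ = 1)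
    (hsp : SemiProperSMul G M)
    (K : Set M) (hK : IsCompact K)
    (E : Set (G ⧸ stabilizer G m₀))
    (hE : IsCompact (semiAct m₀ coord m₀ '' E)) :
    ∃ C : Set M, IsCompact C ∧
      {x : M | ∃ k ∈ K, ∃ e ∈ E, x = semiAct m₀ coord k e} ⊆ C :=
  semiAct_compact_of_compact_general m₀ coord hc hc0 hsp K hK E hE
end
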